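/- Let T'_1,…,T'_m be pairwise disjoint measurable subsets of a cube [0,n]^d in ℝ^d, each of volume at most 1, with total volume at least n^d/k, and suppose the Minkowski sums T'_i + B(0, t/2) are pairwise disjoint subsets of [−t/2, n+t/2]^d. Then (1 + v_{t/2}^{1/d})^d · n^d / k ≤ (n+t)^d, where v_{t/2} is the volume of the d-dimensional ball of radius t/2. -/

import Mathlib

/-!
The Brunn–Minkowski inequality `λ(A)^{1/d} + λ(B)^{1/d} ≤ λ(A + B)^{1/d}` is proved by the
Hadwiger–Ohmann argument. For finite unions of disjoint boxes one inducts on the number of boxes: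
a hyperplane `x i = c` separating two boxes of `A` cuts `A` into two unions with fewer boxes, and a
parallel hyperplane `x i = r` cuts `B` in the same volume ratio; the two half-sums lie on opposite
sides of `x i = c + r`, and the inequalities for the halves add up to the one for `A + B`. Compact
sets are covered by grid cubes inside a thickening, whose volume tends to that of the set, and
measurable sets are exhausted by compact ones.

With `B = B(0, t/2)` of volume `v` and `λ(T'_i) ≤ 1`, it gives
`(1 + v^{1/d})^d λ(T'_i) ≤ (λ(T'_i)^{1/d} + v^{1/d})^d ≤ λ(T'_i + B)`. The disjoint sets
`T'_i + B` lie in a cube of volume `(n + t)^d`, and `∑ λ(T'_i) ≥ n^d / k`.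
-/

open MeasureTheory Set Pointwise

theorem Real.geom_mean_add_geom_mean_le {ι : Type*} [Fintype ι] [Nonempty ι] {u v : ι → ℝ}
    (hu : ∀ i, 0 ≤ u i) (hv : ∀ i, 0 ≤ v i) (huv : ∀ i, 0 < u i + v i) :
    (∏ i, u i) ^ (Fintype.card ι : ℝ)⁻¹ + (∏ i, v i) ^ (Fintype.card ι : ℝ)⁻¹ ≤
      (∏ i, (u i + v i)) ^ (Fintype.card ι : ℝ)⁻¹ := by
  set w : ℝ := (Fintype.card ι : ℝ)⁻¹
  set P := (∏ i, (u i + v i)) ^ w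
  have hw : ∑ _i : ι, w = 1 := by simp [w]
  have key : ∀ f : ι → ℝ, (∀ i, 0 ≤ f i) →
      (∏ i, f i) ^ w ≤ P * ∑ i, w * (f i / (u i + v i)) := by
    intro f hf
    have hq : ∀ i, 0 ≤ f i / (u i + v i) := fun i => div_nonneg (hf i) (huv i).le
    calc (∏ i, f i) ^ w = ((∏ i, (u i + v i)) * ∏ i, f i / (u i + v i)) ^ w := by
          rw [← Finset.prod_mul_distrib]
          exact congrArg (· ^ w)
            (Finset.prod_congr rfl fun i _ => (mul_div_cancel₀ _ (huv i).ne').symm)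
      _ = P * ∏ i, (f i / (u i + v i)) ^ w := by
          rw [Real.mul_rpow (Finset.prod_nonneg fun i _ => (huv i).le)
            (Finset.prod_nonneg fun i _ => hq i), Real.finsetProd_rpow _ _ fun i _ => hq i]
      _ ≤ P * ∑ i, w * (f i / (u i + v i)) := by
          refine mul_le_mul_of_nonneg_left ?_
            (Real.rpow_nonneg (Finset.prod_nonneg fun i _ => (huv i).le) _)
          exact Real.geom_mean_le_arith_mean_weighted _ _ _ (fun _ _ => by positivity) hw
            fun i _ => hq i
  calc _ ≤ P * ∑ i, w * (u i / (u i + v i)) + P * ∑ i, w * (v i / (u i + v i)) :=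
        add_le_add (key u hu) (key v hv)
    _ = P * ∑ _i : ι, w := by
        rw [← mul_add, ← Finset.sum_add_distrib]
        congr 2 with i
        rw [← mul_add, ← add_div, div_self (huv i).ne', mul_one]
    _ = P := by rw [hw, mul_one]

theorem rpow_inv_add_rpow_inv_le_of_split {d : ℕ} (hd : d ≠ 0) {p q θ z₁ z₂ : ℝ} (hp : 0 ≤ p)
    (hq : 0 ≤ q) (hθ₀ : 0 ≤ θ) (hθ₁ : θ ≤ 1) (hz₁ : 0 ≤ z₁) (hz₂ : 0 ≤ z₂)
    (h₁ : (θ * p) ^ (d : ℝ)⁻¹ + (θ * q) ^ (d : ℝ)⁻¹ ≤ z₁ ^ (d : ℝ)⁻¹)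
    (h₂ : ((1 - θ) * p) ^ (d : ℝ)⁻¹ + ((1 - θ) * q) ^ (d : ℝ)⁻¹ ≤ z₂ ^ (d : ℝ)⁻¹) :
    p ^ (d : ℝ)⁻¹ + q ^ (d : ℝ)⁻¹ ≤ (z₁ + z₂) ^ (d : ℝ)⁻¹ := by
  have hd' : (0 : ℝ) < d := by positivity
  set S := p ^ (d : ℝ)⁻¹ + q ^ (d : ℝ)⁻¹
  have scaled : ∀ {c z : ℝ}, 0 ≤ c → 0 ≤ z →
      (c * p) ^ (d : ℝ)⁻¹ + (c * q) ^ (d : ℝ)⁻¹ ≤ z ^ (d : ℝ)⁻¹ → c * S ^ d ≤ z := by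
    intro c z hc hz h
    rwa [Real.mul_rpow hc hp, Real.mul_rpow hc hq, ← mul_add,
      Real.le_rpow_inv_iff_of_pos (by positivity) hz hd', Real.rpow_natCast, mul_pow,
      Real.rpow_inv_natCast_pow hc hd] at h
  have hsum : S ^ d ≤ z₁ + z₂ := by
    linarith [scaled hθ₀ hz₁ h₁, scaled (sub_nonneg.2 hθ₁) hz₂ h₂]
  rwa [Real.le_rpow_inv_iff_of_pos (by positivity) (by positivity) hd', Real.rpow_natCast]

namespace Finset

noncomputable def traceOn {α : Type*} (s : Finset (Set α)) (H : Set α) : Finset (Set α) :=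
  open Classical in (s.filter fun S => (S ∩ H).Nonempty).image (· ∩ H)

variable {α : Type*} {s : Finset (Set α)} {H : Set α}

lemma biUnion_traceOn : ⋃ S ∈ s.traceOn H, S = (⋃ S ∈ s, S) ∩ H := by
  ext x
  simp only [traceOn, mem_image, mem_filter, mem_iUnion, mem_inter_iff, exists_prop]
  constructor
  · rintro ⟨_, ⟨S, ⟨hS, -⟩, rfl⟩, hxS, hxH⟩
    exact ⟨⟨S, hS, hxS⟩, hxH⟩
  · rintro ⟨⟨S, hS, hxS⟩, hxH⟩
    exact ⟨S ∩ H, ⟨S, ⟨hS, x, hxS, hxH⟩, rfl⟩, hxS, hxH⟩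

lemma card_traceOn_le : (s.traceOn H).card ≤ s.card := by
  classical exact card_image_le.trans (card_filter_le _ _)

lemma card_traceOn_lt {S : Set α} (hS : S ∈ s) (hSH : Disjoint S H) :
    (s.traceOn H).card < s.card := by
  classical
  exact card_image_le.trans_lt <| card_lt_card <| filter_ssubset.2
    ⟨S, hS, by rwa [Set.not_nonempty_iff_eq_empty, ← Set.disjoint_iff_inter_eq_empty]⟩

lemma nonempty_of_toReal_measure_biUnion_pos [MeasurableSpace α] {μ : Measure α}
    (h : 0 < (μ (⋃ S ∈ s, S)).toReal) : s.Nonempty := by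
  rw [nonempty_iff_ne_empty]
  rintro rfl
  simp at h

end Finset

variable {d : ℕ}

/-- Half-open, so that the hyperplane `x i = c` cuts a box into the two boxes
`box ∩ {x | x i < c}` and `box ∩ {x | c ≤ x i}` with no overlap. -/
def box (a b : Fin d → ℝ) : Set (Fin d → ℝ) := Set.univ.pi fun i => Ico (a i) (b i)

def IsBox (S : Set (Fin d → ℝ)) : Prop := ∃ a b, S = box a b

lemma box_nonempty_iff {a b : Fin d → ℝ} : (box a b).Nonempty ↔ ∀ i, a i < b i := by
  simp [box, univ_pi_nonempty_iff]

lemma measurableSet_box (a b : Fin d → ℝ) : MeasurableSet (box a b) :=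
  MeasurableSet.univ_pi fun _ => measurableSet_Ico

lemma isBounded_box (a b : Fin d → ℝ) : Bornology.IsBounded (box a b) :=
  (Metric.isBounded_Icc a b).subset fun _ hx =>
    ⟨fun i => (hx i (mem_univ i)).1, fun i => (hx i (mem_univ i)).2.le⟩

lemma volume_box (a b : Fin d → ℝ) : volume (box a b) = ∏ i, ENNReal.ofReal (b i - a i) :=
  Real.volume_pi_Ico

lemma Ico_subset_Ico_add_Ico {a b c e : ℝ} (hab : a < b) (hce : c < e) :
    Ico (a + c) (b + e) ⊆ Ico a b + Ico c e := by
  rintro x ⟨hx₁, hx₂⟩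
  -- split `x - a - c` between the two intervals in proportion to their lengths
  set τ := (x - a - c) / (b - a + (e - c))
  have hlen : 0 < b - a + (e - c) := by linarith
  have hτ₀ : 0 ≤ τ := div_nonneg (by linarith) hlen.le
  have hτ₁ : τ < 1 := (div_lt_one hlen).2 (by linarith)
  refine ⟨a + τ * (b - a), ⟨by nlinarith, by nlinarith⟩, c + τ * (e - c),
    ⟨by nlinarith, by nlinarith⟩, ?_⟩
  simp only [τ]
  field_simp
  ring

lemma box_add_box {a b c e : Fin d → ℝ} (hab : ∀ i, a i < b i) (hce : ∀ i, c i < e i) :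
    box a b + box c e = box (a + c) (b + e) := by
  apply Subset.antisymm
  · rintro _ ⟨y, hy, z, hz, rfl⟩ i -
    exact ⟨add_le_add (hy i trivial).1 (hz i trivial).1,
      add_lt_add (hy i trivial).2 (hz i trivial).2⟩
  · intro x hx
    choose y hy z hz hyz using fun i => Ico_subset_Ico_add_Ico (hab i) (hce i) (hx i trivial)
    exact ⟨y, fun i _ => hy i, z, fun i _ => hz i, funext hyz⟩

lemma box_inter_lt (a b : Fin d → ℝ) (i : Fin d) (c : ℝ) :
    box a b ∩ {x | x i < c} = box a (Function.update b i (min (b i) c)) := by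
  ext x
  simp only [box, mem_inter_iff, mem_univ_pi, mem_Ico, mem_ofPred_eq, Function.update_apply]
  grind

lemma box_inter_ge (a b : Fin d → ℝ) (i : Fin d) (c : ℝ) :
    box a b ∩ {x | c ≤ x i} = box (Function.update a i (max (a i) c)) b := by
  ext x
  simp only [box, mem_inter_iff, mem_univ_pi, mem_Ico, mem_ofPred_eq, Function.update_apply]
  grind

namespace IsBox

variable {S S' : Set (Fin d → ℝ)}

lemma inter_lt (hS : IsBox S) (i : Fin d) (c : ℝ) : IsBox (S ∩ {x | x i < c}) := by
  obtain ⟨a, b, rfl⟩ := hS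
  exact ⟨_, _, box_inter_lt a b i c⟩

lemma inter_ge (hS : IsBox S) (i : Fin d) (c : ℝ) : IsBox (S ∩ {x | c ≤ x i}) := by
  obtain ⟨a, b, rfl⟩ := hS
  exact ⟨_, _, box_inter_ge a b i c⟩

lemma volume_pos (hS : IsBox S) (hS₀ : S.Nonempty) : 0 < volume S := by
  obtain ⟨a, b, rfl⟩ := hS
  rw [volume_box, CanonicallyOrderedAdd.prod_pos]
  exact fun i _ => ENNReal.ofReal_pos.2 (sub_pos.2 (box_nonempty_iff.1 hS₀ i))

lemma exists_separation (hS : IsBox S) (hS' : IsBox S') (hS₀ : S.Nonempty) (hS'₀ : S'.Nonempty)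
    (hdisj : Disjoint S S') : ∃ i c, (S ⊆ {x | x i < c} ∧ S' ⊆ {x | c ≤ x i}) ∨
      (S' ⊆ {x | x i < c} ∧ S ⊆ {x | c ≤ x i}) := by
  obtain ⟨a, b, rfl⟩ := hS
  obtain ⟨a', b', rfl⟩ := hS'
  have hab := box_nonempty_iff.1 hS₀
  have hab' := box_nonempty_iff.1 hS'₀
  obtain ⟨i, hi⟩ : ∃ i, b i ≤ a' i ∨ b' i ≤ a i := by
    by_contra! h
    exact disjoint_left.1 hdisj
      (show (fun i => max (a i) (a' i)) ∈ box a b from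
        fun i _ => ⟨le_max_left _ _, max_lt (hab i) (h i).1⟩)
      (fun i _ => ⟨le_max_right _ _, max_lt (h i).2 (hab' i)⟩)
  rcases hi with hi | hi
  · exact ⟨i, b i, .inl ⟨fun x hx => (hx i trivial).2, fun x hx => hi.trans (hx i trivial).1⟩⟩
  · exact ⟨i, b' i, .inr ⟨fun x hx => (hx i trivial).2, fun x hx => hi.trans (hx i trivial).1⟩⟩

end IsBox

lemma measurableSet_coord_lt (i : Fin d) (c : ℝ) : MeasurableSet {x : Fin d → ℝ | x i < c} :=
  measurableSet_lt (measurable_pi_apply i) measurable_const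

lemma toReal_measure_inter_lt_add_inter_ge {μ : Measure (Fin d → ℝ)} {U : Set (Fin d → ℝ)}
    (hU : μ U ≠ ⊤) (i : Fin d) (c : ℝ) :
    (μ (U ∩ {x | x i < c})).toReal + (μ (U ∩ {x | c ≤ x i})).toReal = (μ U).toReal := by
  rw [← ENNReal.toReal_add (measure_ne_top_of_subset inter_subset_left hU)
    (measure_ne_top_of_subset inter_subset_left hU)]
  congr 1
  convert measure_inter_add_sdiff U (measurableSet_coord_lt i c) using 3
  ext x
  simp [not_lt]

lemma measure_add_inter_add_measure_add_inter_le (μ : Measure (Fin d → ℝ))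
    (A B : Set (Fin d → ℝ)) (i : Fin d) (c r : ℝ) :
    μ ((A ∩ {x | x i < c}) + (B ∩ {x | x i < r})) +
      μ ((A ∩ {x | c ≤ x i}) + (B ∩ {x | r ≤ x i})) ≤ μ (A + B) := by
  rw [← measure_inter_add_sdiff (A + B) (measurableSet_coord_lt i (c + r))]
  gcongr
  · rintro _ ⟨y, ⟨hy, hyc⟩, z, ⟨hz, hzr⟩, rfl⟩
    exact ⟨add_mem_add hy hz, show y i + z i < c + r from add_lt_add hyc hzr⟩
  · rintro _ ⟨y, ⟨hy, hyc⟩, z, ⟨hz, hzr⟩, rfl⟩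
    exact ⟨add_mem_add hy hz, not_lt.2 (show c + r ≤ y i + z i from add_le_add hyc hzr)⟩

structure IsBoxFamily (s : Finset (Set (Fin d → ℝ))) : Prop where
  isBox : ∀ S ∈ s, IsBox S
  nonempty : ∀ S ∈ s, S.Nonempty
  pairwiseDisjoint : (s : Set (Set (Fin d → ℝ))).PairwiseDisjoint id

/-- Volumes are read in `ℝ` (`∞.toReal = 0`), so this is the Brunn–Minkowski inequality only for
sets of finite volume. -/
def SatisfiesBrunnMinkowski (A B : Set (Fin d → ℝ)) : Prop :=
  (volume A).toReal ^ (d : ℝ)⁻¹ + (volume B).toReal ^ (d : ℝ)⁻¹ ≤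
    (volume (A + B)).toReal ^ (d : ℝ)⁻¹

lemma SatisfiesBrunnMinkowski.symm {A B : Set (Fin d → ℝ)} (h : SatisfiesBrunnMinkowski A B) :
    SatisfiesBrunnMinkowski B A := by
  rwa [SatisfiesBrunnMinkowski, add_comm, add_comm B]

lemma satisfiesBrunnMinkowski_box (hd : d ≠ 0) {a b c e : Fin d → ℝ} (hab : ∀ i, a i < b i)
    (hce : ∀ i, c i < e i) : SatisfiesBrunnMinkowski (box a b) (box c e) := by
  have : Nonempty (Fin d) := ⟨⟨0, Nat.pos_of_ne_zero hd⟩⟩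
  have h := Real.geom_mean_add_geom_mean_le (u := fun i => b i - a i) (v := fun i => e i - c i)
    (fun i => sub_nonneg.2 (hab i).le) (fun i => sub_nonneg.2 (hce i).le)
    (fun i => by linarith [hab i, hce i])
  rw [Fintype.card_fin] at h
  rw [SatisfiesBrunnMinkowski, box_add_box hab hce, box, box, box,
    Real.volume_pi_Ico_toReal fun i => (hab i).le, Real.volume_pi_Ico_toReal fun i => (hce i).le,
    Real.volume_pi_Ico_toReal (a := a + c) (b := b + e) fun i => add_le_add (hab i).le (hce i).le]
  convert h using 4 with i
  simp only [Pi.add_apply]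
  ring

namespace IsBoxFamily

variable {s t : Finset (Set (Fin d → ℝ))}

lemma traceOn (hs : IsBoxFamily s) {H : Set (Fin d → ℝ)} (hH : ∀ S, IsBox S → IsBox (S ∩ H)) :
    IsBoxFamily (s.traceOn H) where
  isBox := by
    simp only [Finset.traceOn, Finset.mem_image, Finset.mem_filter]
    rintro _ ⟨S, ⟨hS, -⟩, rfl⟩
    exact hH S (hs.isBox S hS)
  nonempty := by
    simp only [Finset.traceOn, Finset.mem_image, Finset.mem_filter]
    rintro _ ⟨S, ⟨-, hSH⟩, rfl⟩
    exact hSH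
  pairwiseDisjoint := by
    classical
    rw [Finset.traceOn, Finset.coe_image]
    exact (hs.pairwiseDisjoint.subset (Finset.coe_subset.2 (Finset.filter_subset _ _))).image_of_le
      fun S => inter_subset_left

lemma measurableSet_of_mem (hs : IsBoxFamily s) {S : Set (Fin d → ℝ)} (hS : S ∈ s) :
    MeasurableSet S := by
  obtain ⟨a, b, rfl⟩ := hs.isBox S hS
  exact measurableSet_box a b

lemma isBounded (hs : IsBoxFamily s) : Bornology.IsBounded (⋃ S ∈ s, S) :=
  (Bornology.isBounded_biUnion_finset _).2 fun S hS => by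
    obtain ⟨a, b, rfl⟩ := hs.isBox S hS
    exact isBounded_box a b

lemma volume_ne_top (hs : IsBoxFamily s) : volume (⋃ S ∈ s, S) ≠ ⊤ :=
  hs.isBounded.measure_lt_top.ne

lemma volume_pos (hs : IsBoxFamily s) (hs₀ : s.Nonempty) : 0 < volume (⋃ S ∈ s, S) := by
  obtain ⟨S, hS⟩ := hs₀
  exact ((hs.isBox S hS).volume_pos (hs.nonempty S hS)).trans_le
    (measure_mono (subset_biUnion_of_mem (u := id) hS))

lemma exists_cut (hs : IsBoxFamily s) (hs₁ : 1 < s.card) :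
    ∃ i c, (s.traceOn {x | x i < c}).card < s.card ∧ (s.traceOn {x | c ≤ x i}).card < s.card ∧
      0 < (volume ((⋃ S ∈ s, S) ∩ {x | x i < c})).toReal ∧
      0 < (volume ((⋃ S ∈ s, S) ∩ {x | c ≤ x i})).toReal := by
  have hpos : ∀ {S H}, S ∈ s → S ⊆ H → 0 < (volume ((⋃ S ∈ s, S) ∩ H)).toReal :=
    fun {S _} hS hSH => ENNReal.toReal_pos
      (((hs.isBox S hS).volume_pos (hs.nonempty S hS)).trans_le
        (measure_mono (subset_inter (subset_biUnion_of_mem (u := id) hS) hSH))).ne'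
      (measure_ne_top_of_subset inter_subset_left hs.volume_ne_top)
  obtain ⟨S, hS, S', hS', hne⟩ := Finset.one_lt_card.1 hs₁
  obtain ⟨i, c, hsep⟩ := (hs.isBox S hS).exists_separation (hs.isBox S' hS')
    (hs.nonempty S hS) (hs.nonempty S' hS') (hs.pairwiseDisjoint hS hS' hne)
  wlog h : S ⊆ {x | x i < c} ∧ S' ⊆ {x | c ≤ x i} generalizing S S'
  · exact this S' hS' S hS (Ne.symm hne) hsep.symm (hsep.resolve_left h)
  refine ⟨i, c, Finset.card_traceOn_lt hS' ?_, Finset.card_traceOn_lt hS ?_, hpos hS h.1,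
    hpos hS' h.2⟩
  · exact disjoint_left.2 fun _ hx hx' => not_lt.2 (h.2 hx) (show _ < c from hx')
  · exact disjoint_left.2 fun _ hx hx' => not_lt.2 (show c ≤ _ from hx') (h.1 hx)

lemma continuous_volume_inter_lt (hs : IsBoxFamily s) (i : Fin d) :
    Continuous fun r => (volume ((⋃ S ∈ s, S) ∩ {x | x i < r})).toReal := by
  have hsum : ∀ r, (volume ((⋃ S ∈ s, S) ∩ {x | x i < r})).toReal =
      ∑ S ∈ s, (volume (S ∩ {x | x i < r})).toReal := by
    intro r
    rw [iUnion₂_inter, measure_biUnion_finset (f := fun S => S ∩ {x | x i < r})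
      (hs.pairwiseDisjoint.mono_on fun S _ => inter_subset_left)
      fun S hS => (hs.measurableSet_of_mem hS).inter (measurableSet_coord_lt i r),
      ENNReal.toReal_sum]
    exact fun S hS => measure_ne_top_of_subset (inter_subset_left.trans
      (subset_biUnion_of_mem (u := id) hS)) hs.volume_ne_top
  simp_rw [hsum]
  refine continuous_finsetSum _ fun S hS => ?_
  obtain ⟨a, b, rfl⟩ := hs.isBox S hS
  simp_rw [box_inter_lt, volume_box, ENNReal.toReal_prod, ENNReal.toReal_ofReal']
  fun_prop

lemma exists_volume_inter_lt_eq (hs : IsBoxFamily s) (i : Fin d) {τ : ℝ} (hτ₀ : 0 ≤ τ)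
    (hτ : τ ≤ (volume (⋃ S ∈ s, S)).toReal) :
    ∃ r, (volume ((⋃ S ∈ s, S) ∩ {x | x i < r})).toReal = τ := by
  obtain ⟨R, hR₀, hR⟩ := hs.isBounded.subset_closedBall_lt 0 0
  have hcoord : ∀ x ∈ ⋃ S ∈ s, S, |x i| ≤ R := fun x hx =>
    (norm_le_pi_norm x i).trans (mem_closedBall_zero_iff.1 (hR hx))
  have hlow : (⋃ S ∈ s, S) ∩ {x | x i < -R} = ∅ :=
    eq_empty_of_forall_notMem fun x ⟨hx, hxR⟩ => (neg_le_of_abs_le (hcoord x hx)).not_gt hxR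
  have hhigh : (⋃ S ∈ s, S) ∩ {x | x i < R + 1} = ⋃ S ∈ s, S :=
    inter_eq_left.2 fun x hx => (le_abs_self _).trans_lt ((hcoord x hx).trans_lt (lt_add_one R))
  obtain ⟨r, -, hr⟩ := intermediate_value_Icc (by linarith : -R ≤ R + 1)
    (hs.continuous_volume_inter_lt i).continuousOn
    (show τ ∈ Icc _ _ by simpa only [hlow, hhigh, measure_empty, ENNReal.toReal_zero] using ⟨hτ₀, hτ⟩)
  exact ⟨r, hr⟩

lemma exists_proportional_cut (ht : IsBoxFamily t) (ht₀ : t.Nonempty) (i : Fin d) {θ : ℝ}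
    (hθ₀ : 0 < θ) (hθ₁ : θ < 1) :
    ∃ r, (t.traceOn {x | x i < r}).Nonempty ∧ (t.traceOn {x | r ≤ x i}).Nonempty ∧
      (volume ((⋃ S ∈ t, S) ∩ {x | x i < r})).toReal = θ * (volume (⋃ S ∈ t, S)).toReal ∧
      (volume ((⋃ S ∈ t, S) ∩ {x | r ≤ x i})).toReal = (1 - θ) * (volume (⋃ S ∈ t, S)).toReal := by
  have hq := ENNReal.toReal_pos (ht.volume_pos ht₀).ne' ht.volume_ne_top
  obtain ⟨r, hr⟩ := ht.exists_volume_inter_lt_eq i (by positivity)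
    (mul_le_of_le_one_left hq.le hθ₁.le)
  have hr' : (volume ((⋃ S ∈ t, S) ∩ {x | r ≤ x i})).toReal =
      (1 - θ) * (volume (⋃ S ∈ t, S)).toReal := by
    linarith [toReal_measure_inter_lt_add_inter_ge ht.volume_ne_top i r]
  refine ⟨r, Finset.nonempty_of_toReal_measure_biUnion_pos (μ := volume) ?_,
    Finset.nonempty_of_toReal_measure_biUnion_pos (μ := volume) ?_, hr, hr'⟩
  · rw [Finset.biUnion_traceOn, hr]
    exact mul_pos hθ₀ hq
  · rw [Finset.biUnion_traceOn, hr']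
    exact mul_pos (by linarith) hq

lemma satisfiesBrunnMinkowski_of_one_lt_card (hd : d ≠ 0) (hs : IsBoxFamily s)
    (ht : IsBoxFamily t) (hs₁ : 1 < s.card) (ht₀ : t.Nonempty)
    (ih : ∀ s' t' : Finset (Set (Fin d → ℝ)), IsBoxFamily s' → IsBoxFamily t' → s'.Nonempty →
      t'.Nonempty → s'.card + t'.card < s.card + t.card →
      SatisfiesBrunnMinkowski (⋃ S ∈ s', S) (⋃ S ∈ t', S)) :
    SatisfiesBrunnMinkowski (⋃ S ∈ s, S) (⋃ S ∈ t, S) := by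
  set A := ⋃ S ∈ s, S
  set B := ⋃ S ∈ t, S
  obtain ⟨i, c, hcard₁, hcard₂, hp₁, hp₂⟩ := hs.exists_cut hs₁
  set p := (volume A).toReal
  set p₁ := (volume (A ∩ {x | x i < c})).toReal
  set p₂ := (volume (A ∩ {x | c ≤ x i})).toReal
  have hp : p₁ + p₂ = p := toReal_measure_inter_lt_add_inter_ge hs.volume_ne_top i c
  set θ := p₁ / p
  have hθ₀ : 0 < θ := div_pos hp₁ (by linarith)
  have hθ₁ : θ < 1 := (div_lt_one (by linarith)).2 (by linarith)
  have hp₁θ : p₁ = θ * p := by simp only [θ]; field_simp [(show p ≠ 0 by linarith)]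
  have hp₂θ : p₂ = (1 - θ) * p := by linarith
  obtain ⟨r, ht₁, ht₂, hq₁, hq₂⟩ := ht.exists_proportional_cut ht₀ i hθ₀ hθ₁
  have hlower := ih (s.traceOn {x | x i < c}) (t.traceOn {x | x i < r})
    (hs.traceOn fun _ h => h.inter_lt i c) (ht.traceOn fun _ h => h.inter_lt i r)
    (Finset.nonempty_of_toReal_measure_biUnion_pos (by rwa [Finset.biUnion_traceOn])) ht₁
    (add_lt_add_of_lt_of_le hcard₁ Finset.card_traceOn_le)
  have hupper := ih (s.traceOn {x | c ≤ x i}) (t.traceOn {x | r ≤ x i})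
    (hs.traceOn fun _ h => h.inter_ge i c) (ht.traceOn fun _ h => h.inter_ge i r)
    (Finset.nonempty_of_toReal_measure_biUnion_pos (by rwa [Finset.biUnion_traceOn])) ht₂
    (add_lt_add_of_lt_of_le hcard₂ Finset.card_traceOn_le)
  rw [SatisfiesBrunnMinkowski, Finset.biUnion_traceOn, Finset.biUnion_traceOn] at hlower hupper
  have hsplit := measure_add_inter_add_measure_add_inter_le volume A B i c r
  have hAB : volume (A + B) ≠ ⊤ := (hs.isBounded.add ht.isBounded).measure_lt_top.ne
  obtain ⟨h₁, h₂⟩ := ENNReal.add_ne_top.1 (ne_top_of_le_ne_top hAB hsplit)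
  refine (rpow_inv_add_rpow_inv_le_of_split hd (p := p) (q := (volume B).toReal) (θ := θ)
    (z₁ := (volume ((A ∩ {x | x i < c}) + (B ∩ {x | x i < r}))).toReal)
    (z₂ := (volume ((A ∩ {x | c ≤ x i}) + (B ∩ {x | r ≤ x i}))).toReal) (by positivity)
    (by positivity) hθ₀.le hθ₁.le (by positivity) (by positivity) ?_ ?_).trans
    (Real.rpow_le_rpow (by positivity) ?_ (by positivity))
  · rw [← hp₁θ, ← hq₁]
    exact hlower
  · rw [← hp₂θ, ← hq₂]
    exact hupper
  · rw [← ENNReal.toReal_add h₁ h₂]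
    exact ENNReal.toReal_mono hAB hsplit

theorem satisfiesBrunnMinkowski (hd : d ≠ 0) (hs : IsBoxFamily s) (ht : IsBoxFamily t)
    (hs₀ : s.Nonempty) (ht₀ : t.Nonempty) :
    SatisfiesBrunnMinkowski (⋃ S ∈ s, S) (⋃ S ∈ t, S) := by
  induction hn : s.card + t.card using Nat.strong_induction_on generalizing s t with
  | _ n ih =>
  have ih' : ∀ s' t' : Finset (Set (Fin d → ℝ)), IsBoxFamily s' → IsBoxFamily t' →
      s'.Nonempty → t'.Nonempty → s'.card + t'.card < s.card + t.card →
      SatisfiesBrunnMinkowski (⋃ S ∈ s', S) (⋃ S ∈ t', S) :=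
    fun s' t' hs' ht' hs'₀ ht'₀ hlt => ih _ (hn ▸ hlt) hs' ht' hs'₀ ht'₀ rfl
  rcases lt_or_ge 1 s.card with hs₁ | hs₁
  · exact hs.satisfiesBrunnMinkowski_of_one_lt_card hd ht hs₁ ht₀ ih'
  rcases lt_or_ge 1 t.card with ht₁ | ht₁
  · exact (ht.satisfiesBrunnMinkowski_of_one_lt_card hd hs ht₁ hs₀
      fun t' s' ht' hs' ht'₀ hs'₀ hlt => (ih' s' t' hs' ht' hs'₀ ht'₀ (by omega)).symm).symm
  obtain ⟨S, rfl⟩ := Finset.card_eq_one.1 (le_antisymm hs₁ (Finset.card_pos.2 hs₀))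
  obtain ⟨T, rfl⟩ := Finset.card_eq_one.1 (le_antisymm ht₁ (Finset.card_pos.2 ht₀))
  have hS := hs.nonempty S (Finset.mem_singleton_self S)
  have hT := ht.nonempty T (Finset.mem_singleton_self T)
  obtain ⟨a, b, rfl⟩ := hs.isBox S (Finset.mem_singleton_self S)
  obtain ⟨c, e, rfl⟩ := ht.isBox T (Finset.mem_singleton_self T)
  simpa using satisfiesBrunnMinkowski_box hd (box_nonempty_iff.1 hS) (box_nonempty_iff.1 hT)

end IsBoxFamily

def gridCube (δ : ℝ) (z : Fin d → ℤ) : Set (Fin d → ℝ) :=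
  box (fun i => δ * z i) (fun i => δ * z i + δ)

lemma mem_gridCube_iff {δ : ℝ} (hδ : 0 < δ) {x : Fin d → ℝ} {z : Fin d → ℤ} :
    x ∈ gridCube δ z ↔ (fun i => ⌊x i / δ⌋) = z := by
  simp only [gridCube, box, mem_univ_pi, mem_Ico, funext_iff, Int.floor_eq_iff, le_div_iff₀ hδ,
    div_lt_iff₀ hδ]
  exact forall_congr' fun i => and_congr (by rw [mul_comm]) (by rw [add_mul, one_mul, mul_comm])

lemma IsCompact.exists_isBoxFamily {K : Set (Fin d → ℝ)} (hK : IsCompact K) (hK₀ : K.Nonempty)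
    {δ : ℝ} (hδ : 0 < δ) : ∃ s : Finset (Set (Fin d → ℝ)), IsBoxFamily s ∧ s.Nonempty ∧
      K ⊆ ⋃ S ∈ s, S ∧ ⋃ S ∈ s, S ⊆ Metric.thickening δ K := by
  set idx : (Fin d → ℝ) → Fin d → ℤ := fun x i => ⌊x i / δ⌋
  have hmem : ∀ x z, x ∈ gridCube δ z ↔ idx x = z := fun x z => mem_gridCube_iff hδ
  obtain ⟨R, hR⟩ := hK.isBounded.subset_closedBall 0
  have hfin : (idx '' K).Finite :=
    (Set.finite_Icc (fun _ => ⌊-R / δ⌋) (fun _ => ⌊R / δ⌋)).subset <| by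
      rintro _ ⟨x, hx, rfl⟩
      have hxR : ∀ i, |x i| ≤ R := fun i =>
        (norm_le_pi_norm x i).trans (mem_closedBall_zero_iff.1 (hR hx))
      exact ⟨fun i => Int.floor_mono (div_le_div_of_nonneg_right (abs_le.1 (hxR i)).1 hδ.le),
        fun i => Int.floor_mono (div_le_div_of_nonneg_right (abs_le.1 (hxR i)).2 hδ.le)⟩
  refine ⟨hfin.toFinset.image (gridCube δ), ⟨?_, ?_, ?_⟩, ?_, ?_, ?_⟩
  · simp only [Finset.mem_image]
    rintro _ ⟨z, -, rfl⟩
    exact ⟨_, _, rfl⟩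
  · simp only [Finset.mem_image, Set.Finite.mem_toFinset]
    rintro _ ⟨_, ⟨x, -, rfl⟩, rfl⟩
    exact ⟨x, (hmem x _).2 rfl⟩
  · rw [Finset.coe_image]
    rintro _ ⟨z, -, rfl⟩ _ ⟨z', -, rfl⟩ hne
    exact disjoint_left.2 fun x hx hx' => hne (by rw [← (hmem x z).1 hx, (hmem x z').1 hx'])
  · exact (hfin.toFinset_nonempty.2 (hK₀.image idx)).image _
  · intro x hx
    exact mem_iUnion₂.2 ⟨gridCube δ (idx x),
      Finset.mem_image_of_mem _ (hfin.mem_toFinset.2 (mem_image_of_mem _ hx)), (hmem x _).2 rfl⟩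
  · simp only [iUnion_subset_iff, Finset.mem_image, Set.Finite.mem_toFinset]
    rintro _ ⟨_, ⟨x, hx, rfl⟩, rfl⟩ y hy
    refine Metric.mem_thickening_iff.2 ⟨x, hx, (dist_pi_lt_iff hδ).2 fun i => ?_⟩
    have h := Int.abs_sub_lt_one_of_floor_eq_floor (congrFun ((hmem y _).1 hy) i)
    rw [← sub_div, abs_div, abs_of_pos hδ, div_lt_one hδ] at h
    rwa [Real.dist_eq]

open Filter Topology Metric in
theorem IsCompact.brunnMinkowski (hd : d ≠ 0) {K L : Set (Fin d → ℝ)} (hK : IsCompact K)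
    (hL : IsCompact L) (hK₀ : K.Nonempty) (hL₀ : L.Nonempty) :
    volume K ^ (d : ℝ)⁻¹ + volume L ^ (d : ℝ)⁻¹ ≤ volume (K + L) ^ (d : ℝ)⁻¹ := by
  have hr : (0 : ℝ) ≤ (d : ℝ)⁻¹ := by positivity
  have hlim : Tendsto (fun δ => volume (cthickening δ (K + L)) ^ (d : ℝ)⁻¹) (𝓝[>] 0)
      (𝓝 (volume (K + L) ^ (d : ℝ)⁻¹)) :=
    ((ENNReal.continuous_rpow_const.tendsto _).comp
      (tendsto_measure_cthickening_of_isCompact (hK.add hL))).mono_left nhdsWithin_le_nhds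
  refine ge_of_tendsto hlim (eventually_nhdsWithin_of_forall fun δ (hδ : 0 < δ) => ?_)
  obtain ⟨s, hs, hs₀, hKs, hsK⟩ := hK.exists_isBoxFamily hK₀ (half_pos hδ)
  obtain ⟨t, ht, ht₀, hLt, htL⟩ := hL.exists_isBoxFamily hL₀ (half_pos hδ)
  have hsub : (⋃ S ∈ s, S) + (⋃ S ∈ t, S) ⊆ cthickening δ (K + L) := calc
    _ ⊆ thickening (δ / 2) K + thickening (δ / 2) L := add_subset_add hsK htL
    _ = thickening δ (K + L) := by
      rw [← add_ball_zero, ← add_ball_zero, ← add_ball_zero, add_add_add_comm,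
        ball_add_ball (half_pos hδ) (half_pos hδ), add_zero, add_halves]
    _ ⊆ cthickening δ (K + L) := thickening_subset_cthickening _ _
  have hbox := hs.satisfiesBrunnMinkowski hd ht hs₀ ht₀
  have hA := ENNReal.rpow_ne_top_of_nonneg hr hs.volume_ne_top
  have hB := ENNReal.rpow_ne_top_of_nonneg hr ht.volume_ne_top
  have hAB := ENNReal.rpow_ne_top_of_nonneg hr
    ((hs.isBounded.add ht.isBounded).measure_lt_top (μ := volume)).ne
  rw [SatisfiesBrunnMinkowski, ENNReal.toReal_rpow, ENNReal.toReal_rpow, ENNReal.toReal_rpow,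
    ← ENNReal.toReal_add hA hB, ENNReal.toReal_le_toReal (ENNReal.add_ne_top.2 ⟨hA, hB⟩) hAB]
    at hbox
  calc volume K ^ (d : ℝ)⁻¹ + volume L ^ (d : ℝ)⁻¹
      ≤ volume (⋃ S ∈ s, S) ^ (d : ℝ)⁻¹ + volume (⋃ S ∈ t, S) ^ (d : ℝ)⁻¹ := by gcongr
    _ ≤ volume ((⋃ S ∈ s, S) + (⋃ S ∈ t, S)) ^ (d : ℝ)⁻¹ := hbox
    _ ≤ volume (cthickening δ (K + L)) ^ (d : ℝ)⁻¹ := by gcongr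

lemma MeasurableSet.rpow_measure_add_le_of_isCompact {α : Type*} [MeasurableSpace α]
    [TopologicalSpace α] {μ : Measure α} [μ.InnerRegular] {A : Set α} (hA : MeasurableSet A)
    {r : ℝ} (hr : 0 < r) {c M : ENNReal} (h : ∀ K ⊆ A, IsCompact K → μ K ^ r + c ≤ M) :
    μ A ^ r + c ≤ M := by
  rw [hA.measure_eq_iSup_isCompact μ, ← ENNReal.orderIsoRpow_apply r hr]
  simp only [OrderIso.map_iSup, ENNReal.orderIsoRpow_apply]
  rw [ENNReal.biSup_add' (p := (· ⊆ A)) ⟨∅, empty_subset _⟩]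
  refine iSup₂_le fun K hK => ?_
  by_cases hKc : IsCompact K
  · simpa [hKc] using h K hK hKc
  · simpa [hKc, hr] using h ∅ (empty_subset _) isCompact_empty

theorem MeasurableSet.brunnMinkowski (hd : d ≠ 0) {A B : Set (Fin d → ℝ)} (hA : MeasurableSet A)
    (hB : MeasurableSet B) (hA₀ : A.Nonempty) (hB₀ : B.Nonempty) :
    volume A ^ (d : ℝ)⁻¹ + volume B ^ (d : ℝ)⁻¹ ≤ volume (A + B) ^ (d : ℝ)⁻¹ := by
  obtain ⟨a, ha⟩ := hA₀
  obtain ⟨b, hb⟩ := hB₀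
  have hr : (0 : ℝ) < (d : ℝ)⁻¹ := by positivity
  refine hA.rpow_measure_add_le_of_isCompact hr fun K hKA hK => ?_
  rw [add_comm]
  refine hB.rpow_measure_add_le_of_isCompact hr fun L hLB hL => ?_
  rw [add_comm]
  calc volume K ^ (d : ℝ)⁻¹ + volume L ^ (d : ℝ)⁻¹
      ≤ volume (insert a K) ^ (d : ℝ)⁻¹ + volume (insert b L) ^ (d : ℝ)⁻¹ := by
        gcongr <;> exact subset_insert _ _
    _ ≤ volume (insert a K + insert b L) ^ (d : ℝ)⁻¹ :=
        (hK.insert a).brunnMinkowski hd (hL.insert b) (insert_nonempty _ _) (insert_nonempty _ _)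
    _ ≤ volume (A + B) ^ (d : ℝ)⁻¹ := by
        gcongr
        exacts [insert_subset ha hKA, insert_subset hb hLB]

namespace EuclideanSpace

lemma volume_preimage_toLp (S : Set (EuclideanSpace ℝ (Fin d))) :
    volume (WithLp.toLp 2 ⁻¹' S) = volume S :=
  (volume_preserving_symm_measurableEquiv_toLp (Fin d)).symm.measure_preimage_equiv S

lemma preimage_toLp_add (A B : Set (EuclideanSpace ℝ (Fin d))) :
    WithLp.toLp 2 ⁻¹' (A + B) = WithLp.toLp 2 ⁻¹' A + WithLp.toLp 2 ⁻¹' B := by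
  ext x
  constructor
  · rintro ⟨a, ha, b, hb, hab⟩
    exact ⟨a.ofLp, ha, b.ofLp, hb, congrArg WithLp.ofLp hab⟩
  · rintro ⟨a, ha, b, hb, rfl⟩
    exact ⟨_, ha, _, hb, rfl⟩

theorem brunnMinkowski (hd : d ≠ 0) {A B : Set (EuclideanSpace ℝ (Fin d))}
    (hA : MeasurableSet A) (hB : MeasurableSet B) (hA₀ : A.Nonempty) (hB₀ : B.Nonempty) :
    volume A ^ (d : ℝ)⁻¹ + volume B ^ (d : ℝ)⁻¹ ≤ volume (A + B) ^ (d : ℝ)⁻¹ := by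
  have h := (hA.preimage (WithLp.measurable_toLp 2 _)).brunnMinkowski hd
    (hB.preimage (WithLp.measurable_toLp 2 _)) (hA₀.preimage (WithLp.toLp_surjective 2))
    (hB₀.preimage (WithLp.toLp_surjective 2))
  rwa [← preimage_toLp_add, volume_preimage_toLp, volume_preimage_toLp,
    volume_preimage_toLp] at h

lemma volume_setOf_forall_mem_Icc {a b : ℝ} (hab : a ≤ b) :
    volume {x : EuclideanSpace ℝ (Fin d) | ∀ j, x j ∈ Icc a b} =
      ENNReal.ofReal ((b - a) ^ d) := by
  rw [← volume_preimage_toLp,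
    show WithLp.toLp 2 ⁻¹' {x : EuclideanSpace ℝ (Fin d) | ∀ j, x j ∈ Icc a b} =
      Icc (fun _ => a) (fun _ => b) by ext x; simp [Pi.le_def, forall_and],
    Real.volume_Icc_pi, Finset.prod_const, Finset.card_univ, Fintype.card_fin,
    ENNReal.ofReal_pow (sub_nonneg.2 hab)]

theorem mul_volume_le_volume_add (hd : d ≠ 0) {T B : Set (EuclideanSpace ℝ (Fin d))}
    (hT : MeasurableSet T) (hB : MeasurableSet B) (hB₀ : B.Nonempty) (hT₁ : volume T ≤ 1) :
    (1 + volume B ^ (d : ℝ)⁻¹) ^ d * volume T ≤ volume (T + B) := by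
  rcases T.eq_empty_or_nonempty with rfl | hT₀
  · simp
  have hx : volume T ^ (d : ℝ)⁻¹ ≤ 1 := ENNReal.rpow_le_one hT₁ (by positivity)
  calc (1 + volume B ^ (d : ℝ)⁻¹) ^ d * volume T
      = ((1 + volume B ^ (d : ℝ)⁻¹) * volume T ^ (d : ℝ)⁻¹) ^ d := by
        rw [mul_pow, ENNReal.rpow_inv_natCast_pow hd]
    _ ≤ (volume T ^ (d : ℝ)⁻¹ + volume B ^ (d : ℝ)⁻¹) ^ d := by
        rw [add_mul, one_mul]
        gcongr
        exact mul_le_of_le_one_right' hx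
    _ ≤ (volume (T + B) ^ (d : ℝ)⁻¹) ^ d := by gcongr; exact brunnMinkowski hd hT hB hT₀ hB₀
    _ = volume (T + B) := ENNReal.rpow_inv_natCast_pow hd _

end EuclideanSpace

theorem stmt_9_general (d : ℕ) (hd : 0 < d) (n t k : ℝ) (hn : 0 < n) (ht : 0 < t)
    (m : ℕ) (T : Fin m → Set (EuclideanSpace ℝ (Fin d)))
    (hmeas : ∀ i, MeasurableSet (T i))
    (hvol : ∀ i, volume (T i) ≤ 1)
    (htotal : ENNReal.ofReal (n ^ d / k) ≤ ∑ i, volume (T i))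
    (hdisj' : ∀ i j, i ≠ j →
      Disjoint (T i + Metric.ball (0 : EuclideanSpace ℝ (Fin d)) (t / 2))
               (T j + Metric.ball (0 : EuclideanSpace ℝ (Fin d)) (t / 2)))
    (hsub' : ∀ i, T i + Metric.ball (0 : EuclideanSpace ℝ (Fin d)) (t / 2) ⊆
      {x | ∀ j, x j ∈ Set.Icc (-(t / 2)) (n + t / 2)}) :
    (1 + (volume (Metric.ball (0 : EuclideanSpace ℝ (Fin d)) (t / 2))).toReal
        ^ ((1 : ℝ) / d)) ^ d * n ^ d / k ≤ (n + t) ^ d := by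
  set B := Metric.ball (0 : EuclideanSpace ℝ (Fin d)) (t / 2)
  have hC : ENNReal.ofReal ((1 + (volume B).toReal ^ ((1 : ℝ) / d)) ^ d) =
      (1 + volume B ^ (d : ℝ)⁻¹) ^ d := by
    rw [ENNReal.ofReal_pow (by positivity), ENNReal.ofReal_add zero_le_one (by positivity),
      ENNReal.ofReal_one, ← ENNReal.ofReal_rpow_of_nonneg ENNReal.toReal_nonneg (by positivity),
      ENNReal.ofReal_toReal measure_ball_lt_top.ne, one_div]
  rw [← ENNReal.ofReal_le_ofReal_iff (by positivity), mul_div_assoc,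
    ENNReal.ofReal_mul (by positivity), hC]
  calc (1 + volume B ^ (d : ℝ)⁻¹) ^ d * ENNReal.ofReal (n ^ d / k)
      ≤ ∑ i, (1 + volume B ^ (d : ℝ)⁻¹) ^ d * volume (T i) := by
        rw [← Finset.mul_sum]
        gcongr
    _ ≤ ∑ i, volume (T i + B) := Finset.sum_le_sum fun i _ =>
        EuclideanSpace.mul_volume_le_volume_add hd.ne' (hmeas i) measurableSet_ball
          (Metric.nonempty_ball.2 (by positivity)) (hvol i)
    _ = volume (⋃ i, T i + B) := by
        rw [measure_iUnion (fun i j hij => hdisj' i j hij)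
          fun i => Metric.isOpen_ball.add_left.measurableSet, tsum_fintype]
    _ ≤ volume {x : EuclideanSpace ℝ (Fin d) | ∀ j, x j ∈ Icc (-(t / 2)) (n + t / 2)} :=
        measure_mono (iUnion_subset hsub')
    _ = ENNReal.ofReal ((n + t) ^ d) := by
        rw [EuclideanSpace.volume_setOf_forall_mem_Icc (by linarith)]
        ring_nf

/-- If T'_1,…,T'_m are pairwise disjoint measurable subsets of the cube
[0,n]^d in ℝ^d, each of volume at most 1, with total volume at least n^d/k, and the
Minkowski sums T'_i + B(0,t/2) are pairwise disjoint subsets of [−t/2,n+t/2]^d, then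
(1 + v_{t/2}^{1/d})^d · n^d / k ≤ (n+t)^d, where v_{t/2} is the volume of the
d-dimensional ball of radius t/2. -/
theorem stmt_9 (d : ℕ) (hd : 0 < d) (n t k : ℝ) (hn : 0 < n) (ht : 0 < t) (hk : 0 < k)
    (m : ℕ) (T : Fin m → Set (EuclideanSpace ℝ (Fin d)))
    (hmeas : ∀ i, MeasurableSet (T i))
    (hsub : ∀ i, T i ⊆ {x | ∀ j, x j ∈ Set.Icc 0 n})
    (hdisj : ∀ i j, i ≠ j → Disjoint (T i) (T j))
    (hvol : ∀ i, volume (T i) ≤ 1)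
    (htotal : ENNReal.ofReal (n ^ d / k) ≤ ∑ i, volume (T i))
    (hdisj' : ∀ i j, i ≠ j →
      Disjoint (T i + Metric.ball (0 : EuclideanSpace ℝ (Fin d)) (t / 2))
               (T j + Metric.ball (0 : EuclideanSpace ℝ (Fin d)) (t / 2)))
    (hsub' : ∀ i, T i + Metric.ball (0 : EuclideanSpace ℝ (Fin d)) (t / 2) ⊆
      {x | ∀ j, x j ∈ Set.Icc (-(t / 2)) (n + t / 2)}) :
    (1 + (volume (Metric.ball (0 : EuclideanSpace ℝ (Fin d)) (t / 2))).toReal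
        ^ ((1 : ℝ) / d)) ^ d * n ^ d / k ≤ (n + t) ^ d :=
  stmt_9_general d hd n t k hn ht m T hmeas hvol htotal hdisj' hsub'
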